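/- Let Φ be an N-function with index s ≥ 1 and let m ≥ 1 be a real number. Then the function t ↦ (Φ(t))^m is an N-function with index s + (m−1)·(s+1). -/

import Mathlib

open Real Set Filter MeasureTheory
open scoped RealInnerProductSpace

/-- An N-function with index `s ≥ 1`: a function `Φ : [0,∞) → [0,∞)` with `Φ(0) = 0`,
strictly increasing and convex, `Φ(t)/t → 0` as `t → 0⁺`, `Φ(t)/t → ∞` as `t → ∞`,
continuously differentiable on `[0,∞)`, twice continuously differentiable on `(0,∞)`,
and `Φ'(t) > 0` with `(1/s)·Φ'(t) ≤ t·Φ''(t) ≤ s·Φ'(t)` for every `t > 0`. -/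
structure IsNFunction (Φ : ℝ → ℝ) (s : ℝ) : Prop where
  s_ge_one : 1 ≤ s
  nonneg : ∀ t, 0 ≤ t → 0 ≤ Φ t
  zero : Φ 0 = 0
  strictMonoOn : StrictMonoOn Φ (Ici 0)
  convexOn : ConvexOn ℝ (Ici 0) Φ
  tendsto_zero : Tendsto (fun t => Φ t / t) (nhdsWithin 0 (Ioi 0)) (nhds 0)
  tendsto_atTop : Tendsto (fun t => Φ t / t) atTop atTop
  contDiffOn_one : ContDiffOn ℝ 1 Φ (Ici 0)
  contDiffOn_two : ContDiffOn ℝ 2 Φ (Ioi 0)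
  deriv_pos : ∀ t, 0 < t → 0 < deriv Φ t
  index_lower : ∀ t, 0 < t → (1 / s) * deriv Φ t ≤ t * deriv (deriv Φ) t
  index_upper : ∀ t, 0 < t → t * deriv (deriv Φ) t ≤ s * deriv Φ t

/-! With `Ψ = Φ^m` one has `tΨ''/Ψ' = tΦ''/Φ' + (m - 1)·tΦ'/Φ`. The first term lies in
`[1/s, s]`, and the second in `[0, (m - 1)(s + 1)]` because `tΦ' ≤ (s + 1)Φ`: the function
`(s + 1)Φ - tΦ'` has derivative `sΦ' - tΦ'' ≥ 0` on `(0,∞)` and tends to `0` at `0⁺`. Since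
`1/(s + (m - 1)(s + 1)) ≤ 1/s`, both index bounds for `Ψ` follow. -/

open Topology

theorem nonneg_of_hasDerivAt_nonneg_of_tendsto_nhdsGT {f f' : ℝ → ℝ} {a t : ℝ}
    (hf : ∀ x ∈ Ioi a, HasDerivAt f (f' x) x) (hf' : ∀ x ∈ Ioi a, 0 ≤ f' x)
    (hlim : Tendsto f (𝓝[>] a) (𝓝 0)) (ht : a < t) : 0 ≤ f t := by
  have hmono : MonotoneOn f (Ioi a) :=
    monotoneOn_of_hasDerivWithinAt_nonneg (convex_Ioi a)
      (fun x hx => (hf x hx).continuousAt.continuousWithinAt)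
      (fun x hx => (hf x (interior_subset hx)).hasDerivWithinAt)
      (fun x hx => hf' x (interior_subset hx))
  refine le_of_tendsto hlim ?_
  filter_upwards [Ioc_mem_nhdsGT ht] with x hx
  exact hmono hx.1 ht hx.2

namespace IsNFunction

variable {Φ : ℝ → ℝ} {s : ℝ} {t : ℝ}

theorem pos (hΦ : IsNFunction Φ s) (ht : 0 < t) : 0 < Φ t := by
  simpa [hΦ.zero] using hΦ.strictMonoOn self_mem_Ici ht.le ht

theorem hasDerivAt (hΦ : IsNFunction Φ s) (ht : 0 < t) : HasDerivAt Φ (deriv Φ t) t :=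
  ((hΦ.contDiffOn_two.differentiableOn two_ne_zero).differentiableAt
    (Ioi_mem_nhds ht)).hasDerivAt

theorem hasDerivAt_deriv (hΦ : IsNFunction Φ s) (ht : 0 < t) :
    HasDerivAt (deriv Φ) (deriv (deriv Φ) t) t :=
  (((hΦ.contDiffOn_two.deriv_of_isOpen isOpen_Ioi le_rfl).differentiableOn
    one_ne_zero).differentiableAt (Ioi_mem_nhds ht)).hasDerivAt

theorem tendsto_nhdsGT_zero (hΦ : IsNFunction Φ s) : Tendsto Φ (𝓝[>] 0) (𝓝 0) := by
  have h := (hΦ.contDiffOn_one.continuousOn 0 self_mem_Ici).tendsto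
  rw [hΦ.zero] at h
  exact h.mono_left (nhdsWithin_mono 0 Ioi_subset_Ici_self)

theorem tendsto_mul_deriv_nhdsGT_zero (hΦ : IsNFunction Φ s) :
    Tendsto (fun u => u * deriv Φ u) (𝓝[>] 0) (𝓝 0) := by
  have hc1 : ContDiffOn ℝ (0 + 1 : ℕ) Φ (Ici 0) := by exact_mod_cast hΦ.contDiffOn_one
  have hD : ContinuousWithinAt (derivWithin Φ (Ici 0)) (Ici 0) 0 :=
    contDiffOn_zero.1 ((contDiffOn_succ_iff_derivWithin (uniqueDiffOn_Ici 0)).1 hc1).2.2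
      0 self_mem_Ici
  have h : Tendsto (fun u => u * derivWithin Φ (Ici 0) u) (𝓝[>] 0)
      (𝓝 (0 * derivWithin Φ (Ici 0) 0)) :=
    (continuousWithinAt_id.mul hD).tendsto.mono_left (nhdsWithin_mono 0 Ioi_subset_Ici_self)
  rw [zero_mul] at h
  refine h.congr' ?_
  filter_upwards [self_mem_nhdsWithin] with u hu
  rw [derivWithin_of_mem_nhds (mem_of_superset (Ioi_mem_nhds hu) Ioi_subset_Ici_self)]

theorem mul_deriv_le (hΦ : IsNFunction Φ s) (ht : 0 < t) :
    t * deriv Φ t ≤ (s + 1) * Φ t := by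
  have hlim : Tendsto (fun u => (s + 1) * Φ u - u * deriv Φ u) (𝓝[>] 0) (𝓝 0) := by
    simpa using (hΦ.tendsto_nhdsGT_zero.const_mul (s + 1)).sub hΦ.tendsto_mul_deriv_nhdsGT_zero
  have h := nonneg_of_hasDerivAt_nonneg_of_tendsto_nhdsGT
    (f := fun u => (s + 1) * Φ u - u * deriv Φ u)
    (fun u hu => ((hΦ.hasDerivAt hu).const_mul (s + 1)).sub
      ((hasDerivAt_id u).mul (hΦ.hasDerivAt_deriv hu)))
    (fun u hu => by simp only [id]; linarith [hΦ.index_upper u hu])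
    hlim ht
  linarith

theorem hasDerivAt_rpow (hΦ : IsNFunction Φ s) (m : ℝ) (ht : 0 < t) :
    HasDerivAt (fun u => Φ u ^ m) (m * Φ t ^ (m - 1) * deriv Φ t) t := by
  convert (hΦ.hasDerivAt ht).rpow_const (p := m) (Or.inl (hΦ.pos ht).ne') using 1
  ring

theorem deriv_deriv_rpow (hΦ : IsNFunction Φ s) (m : ℝ) (ht : 0 < t) :
    deriv (deriv fun u => Φ u ^ m) t =
      m * Φ t ^ (m - 1) * (deriv (deriv Φ) t + (m - 1) * deriv Φ t ^ 2 / Φ t) := by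
  have hderiv : deriv (fun u => Φ u ^ m) =ᶠ[𝓝 t] fun u => m * Φ u ^ (m - 1) * deriv Φ u := by
    filter_upwards [Ioi_mem_nhds ht] with u hu
    exact (hΦ.hasDerivAt_rpow m hu).deriv
  rw [hderiv.deriv_eq]
  have h : HasDerivAt (fun u => m * Φ u ^ (m - 1) * deriv Φ u) _ t :=
    (((hΦ.hasDerivAt ht).rpow_const (Or.inl (hΦ.pos ht).ne')).const_mul m).mul
      (hΦ.hasDerivAt_deriv ht)
  rw [h.deriv, rpow_sub_one (hΦ.pos ht).ne']
  field_simp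
  ring

variable {m : ℝ}

theorem convexOn_rpow (hΦ : IsNFunction Φ s) (hm : 1 ≤ m) :
    ConvexOn ℝ (Ici 0) fun t => Φ t ^ m := by
  refine ⟨convex_Ici 0, fun x hx y hy a b ha hb hab => ?_⟩
  have hxy : a • x + b • y ∈ Ici (0 : ℝ) := convex_Ici 0 hx hy ha hb hab
  calc Φ (a • x + b • y) ^ m ≤ (a • Φ x + b • Φ y) ^ m :=
        rpow_le_rpow (hΦ.nonneg _ hxy) (hΦ.convexOn.2 hx hy ha hb hab) (by linarith)
    _ ≤ a • Φ x ^ m + b • Φ y ^ m :=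
        (_root_.convexOn_rpow hm).2 (hΦ.nonneg x hx) (hΦ.nonneg y hy) ha hb hab

theorem tendsto_rpow_div_nhdsGT_zero (hΦ : IsNFunction Φ s) (hm : 1 ≤ m) :
    Tendsto (fun t => Φ t ^ m / t) (𝓝[>] 0) (𝓝 0) := by
  have hpow : Tendsto (fun t => Φ t ^ (m - 1)) (𝓝[>] 0) (𝓝 ((0 : ℝ) ^ (m - 1))) :=
    (continuousAt_rpow_const 0 (m - 1) (Or.inr (by linarith))).tendsto.comp
      hΦ.tendsto_nhdsGT_zero
  have h := hΦ.tendsto_zero.mul hpow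
  rw [zero_mul] at h
  refine h.congr' ?_
  filter_upwards [self_mem_nhdsWithin] with t ht
  rw [rpow_sub_one (hΦ.pos ht).ne']
  field_simp [(hΦ.pos ht).ne']

theorem tendsto_rpow_div_atTop (hΦ : IsNFunction Φ s) (hm : 1 ≤ m) :
    Tendsto (fun t => Φ t ^ m / t) atTop atTop := by
  refine tendsto_atTop_mono' atTop ?_ hΦ.tendsto_atTop
  filter_upwards [hΦ.tendsto_atTop.eventually_ge_atTop 1, eventually_gt_atTop 1]
    with t hΦt ht
  have ht0 : 0 < t := one_pos.trans ht
  rw [le_div_iff₀ ht0, one_mul] at hΦt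
  gcongr
  exact self_le_rpow_of_one_le (ht.le.trans hΦt) hm

theorem index_lower_rpow (hΦ : IsNFunction Φ s) (hm : 1 ≤ m) (ht : 0 < t) :
    1 / (s + (m - 1) * (s + 1)) * deriv (fun u => Φ u ^ m) t ≤
      t * deriv (deriv fun u => Φ u ^ m) t := by
  rw [(hΦ.hasDerivAt_rpow m ht).deriv, hΦ.deriv_deriv_rpow m ht]
  have hs := hΦ.s_ge_one
  have hΦt := hΦ.pos ht
  have hc : 0 < m * Φ t ^ (m - 1) := mul_pos (by linarith) (rpow_pos_of_pos hΦt _)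
  have hcoef : 1 / (s + (m - 1) * (s + 1)) ≤ 1 / s :=
    one_div_le_one_div_of_le (by linarith) (by nlinarith)
  have hextra : 0 ≤ t * ((m - 1) * deriv Φ t ^ 2 / Φ t) := by
    have : 0 ≤ m - 1 := by linarith
    positivity
  calc 1 / (s + (m - 1) * (s + 1)) * (m * Φ t ^ (m - 1) * deriv Φ t)
      ≤ m * Φ t ^ (m - 1) * (1 / s * deriv Φ t) := by
        rw [mul_left_comm]
        gcongr
        exact (hΦ.deriv_pos t ht).le
    _ ≤ m * Φ t ^ (m - 1) * (t * deriv (deriv Φ) t + t * ((m - 1) * deriv Φ t ^ 2 / Φ t)) := by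
        gcongr
        linarith [hΦ.index_lower t ht]
    _ = t * (m * Φ t ^ (m - 1) * (deriv (deriv Φ) t + (m - 1) * deriv Φ t ^ 2 / Φ t)) := by
        ring

theorem index_upper_rpow (hΦ : IsNFunction Φ s) (hm : 1 ≤ m) (ht : 0 < t) :
    t * deriv (deriv fun u => Φ u ^ m) t ≤
      (s + (m - 1) * (s + 1)) * deriv (fun u => Φ u ^ m) t := by
  rw [(hΦ.hasDerivAt_rpow m ht).deriv, hΦ.deriv_deriv_rpow m ht]
  have hΦt := hΦ.pos ht
  have hc : 0 < m * Φ t ^ (m - 1) := mul_pos (by linarith) (rpow_pos_of_pos hΦt _)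
  have hratio : t * deriv Φ t / Φ t ≤ s + 1 := (div_le_iff₀ hΦt).2 (hΦ.mul_deriv_le ht)
  have hm1 : 0 ≤ m - 1 := by linarith
  have hΦ' := (hΦ.deriv_pos t ht).le
  calc t * (m * Φ t ^ (m - 1) * (deriv (deriv Φ) t + (m - 1) * deriv Φ t ^ 2 / Φ t))
      = m * Φ t ^ (m - 1) * (t * deriv (deriv Φ) t +
          (m - 1) * deriv Φ t * (t * deriv Φ t / Φ t)) := by
        ring
    _ ≤ m * Φ t ^ (m - 1) * (s * deriv Φ t + (m - 1) * deriv Φ t * (s + 1)) := by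
        exact mul_le_mul_of_nonneg_left (add_le_add (hΦ.index_upper t ht)
          (mul_le_mul_of_nonneg_left hratio (mul_nonneg hm1 hΦ'))) hc.le
    _ = (s + (m - 1) * (s + 1)) * (m * Φ t ^ (m - 1) * deriv Φ t) := by
        ring

end IsNFunction

/-- If `Φ` is an N-function with index `s ≥ 1` and `m ≥ 1` is real, then
`t ↦ Φ(t)^m` is an N-function with index `s + (m−1)·(s+1)`. -/
theorem statement8 (Φ : ℝ → ℝ) (s : ℝ) (hΦ : IsNFunction Φ s) (m : ℝ) (hm : 1 ≤ m) :
    IsNFunction (fun t => Φ t ^ m) (s + (m - 1) * (s + 1)) := by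
  have hm0 : 0 < m := by linarith
  have hΦ1 : ContDiffOn ℝ 1 (fun x : ℝ => x ^ m) univ :=
    (contDiff_rpow_const_of_le (n := 1) (by exact_mod_cast hm)).contDiffOn
  exact
    { s_ge_one := by nlinarith [hΦ.s_ge_one]
      nonneg := fun t ht => rpow_nonneg (hΦ.nonneg t ht) m
      zero := by simp [hΦ.zero, hm0.ne']
      strictMonoOn := fun x hx y hy hxy =>
        rpow_lt_rpow (hΦ.nonneg x hx) (hΦ.strictMonoOn hx hy hxy) hm0
      convexOn := hΦ.convexOn_rpow hm
      tendsto_zero := hΦ.tendsto_rpow_div_nhdsGT_zero hm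
      tendsto_atTop := hΦ.tendsto_rpow_div_atTop hm
      contDiffOn_one := hΦ1.comp hΦ.contDiffOn_one (mapsTo_univ _ _)
      contDiffOn_two := (contDiffOn_fun_id.rpow_const_of_ne (fun x hx => (ne_of_gt hx))).comp
        hΦ.contDiffOn_two fun t ht => hΦ.pos ht
      deriv_pos := fun t ht => by
        rw [(hΦ.hasDerivAt_rpow m ht).deriv]
        exact mul_pos (mul_pos hm0 (rpow_pos_of_pos (hΦ.pos ht) _)) (hΦ.deriv_pos t ht)
      index_lower := fun t ht => hΦ.index_lower_rpow hm ht
      index_upper := fun t ht => hΦ.index_upper_rpow hm ht }
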